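/- With m > 1, for every x ∈ ℝᵐ one has Ĩ_T(x) ≤ Î_T(x), where Î_T(x) = inf{ Q̃_T(g) : g ∈ (H₀¹)ᵐ, g(T) = x } and Ĩ_T(x) = (1/2) inf{ ‖y‖² + ∫₀ᵀ ‖ḟ(t)‖² dt : y ∈ ℝᵐ, f ∈ (H₀¹)ᵐ, Ψ(y,f) = x } (both equal to ∞ when the respective constraints are unsatisfiable). -/

import Mathlib

/-!
Let `(l, f)` be a control with `Φ(l, f) = g` and `g(T) = x`. Only the `σ C̄`-term
`w = ∫₀ᵀ σ(s, f̂(s)) C̄ l̇(s) ds` of `Φ(l, f)(T)` differs from `Ψ(·, f)`, and Cauchy–Schwarz gives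
`‖w‖ ≤ (∫₀ᵀ ‖σ C̄‖_*²)^{1/2} ‖l̇‖_{L²}`. Hence `w = (∫₀ᵀ ‖σ C̄‖_*²)^{1/2} y` for some `y` with
`‖y‖² ≤ ∫₀ᵀ ‖l̇‖²`, so `Ψ(y, f) = x` and `(y, f)` costs no more than `(l, f)`.
-/

open MeasureTheory
open scoped ENNReal

/-- The Euclidean operator norm of an `m×m` real matrix. -/
noncomputable def matOpNorm {m : ℕ} (A : Matrix (Fin m) (Fin m) ℝ) : ℝ :=
  sSup {r : ℝ | ∃ v : Fin m → ℝ, (∑ i, (v i) ^ 2) = 1 ∧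
    r = Real.sqrt (∑ i, (A.mulVec v i) ^ 2)}

/-- Membership in the `m`-dimensional Cameron–Martin space `(H₀¹)ᵐ` on `[0,T]`. -/
def IsCMv (T : ℝ) (m : ℕ) (f f' : ℝ → Fin m → ℝ) : Prop :=
  f 0 = 0 ∧ (∀ t ∈ Set.Icc (0:ℝ) T, f t = ∫ s in (0:ℝ)..t, f' s) ∧
  IntervalIntegrable f' volume 0 T ∧
  IntervalIntegrable (fun s => ∑ i, (f' s i) ^ 2) volume 0 T

/-- The multidimensional path functional `Φ(l,f)(t)`. -/
noncomputable def PhiM (d m : ℕ) (b : ℝ → (Fin d → ℝ) → Fin m → ℝ)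
    (σ : ℝ → (Fin d → ℝ) → Matrix (Fin m) (Fin m) ℝ)
    (C Cbar : Matrix (Fin m) (Fin m) ℝ)
    (hat : (ℝ → Fin m → ℝ) → ℝ → Fin d → ℝ)
    (l' f f' : ℝ → Fin m → ℝ) (t : ℝ) : Fin m → ℝ :=
  (∫ s in (0:ℝ)..t, b s (hat f s)) +
    (∫ s in (0:ℝ)..t, (σ s (hat f s) * Cbar).mulVec (l' s)) +
    (∫ s in (0:ℝ)..t, (σ s (hat f s) * C).mulVec (f' s))

/-- The multidimensional sample-path rate function `Q̃_T(g)` (value `∞` when the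
equation `Φ(l,f) = g` has no solution). -/
noncomputable def QTM (T : ℝ) (d m : ℕ) (b : ℝ → (Fin d → ℝ) → Fin m → ℝ)
    (σ : ℝ → (Fin d → ℝ) → Matrix (Fin m) (Fin m) ℝ)
    (C Cbar : Matrix (Fin m) (Fin m) ℝ)
    (hat : (ℝ → Fin m → ℝ) → ℝ → Fin d → ℝ) (g : ℝ → Fin m → ℝ) : ℝ≥0∞ :=
  sInf {v : ℝ≥0∞ | ∃ l l' f f' : ℝ → Fin m → ℝ, IsCMv T m l l' ∧ IsCMv T m f f' ∧
    (∀ t ∈ Set.Icc (0:ℝ) T, PhiM d m b σ C Cbar hat l' f f' t = g t) ∧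
    v = ENNReal.ofReal ((1 / 2) *
      ((∫ t in (0:ℝ)..T, ∑ i, (l' t i) ^ 2) + ∫ t in (0:ℝ)..T, ∑ i, (f' t i) ^ 2))}

/-- The multidimensional functional `Ψ(y,f)`. -/
noncomputable def PsiM (T : ℝ) (d m : ℕ) (b : ℝ → (Fin d → ℝ) → Fin m → ℝ)
    (σ : ℝ → (Fin d → ℝ) → Matrix (Fin m) (Fin m) ℝ)
    (C Cbar : Matrix (Fin m) (Fin m) ℝ)
    (hat : (ℝ → Fin m → ℝ) → ℝ → Fin d → ℝ)
    (y : Fin m → ℝ) (f f' : ℝ → Fin m → ℝ) : Fin m → ℝ :=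
  (∫ s in (0:ℝ)..T, b s (hat f s)) +
    (∫ s in (0:ℝ)..T, (σ s (hat f s) * C).mulVec (f' s)) +
    Real.sqrt (∫ s in (0:ℝ)..T, (matOpNorm (σ s (hat f s) * Cbar)) ^ 2) • y

open scoped Matrix Matrix.Norms.L2Operator

lemma sum_sq_eq_norm_toLp_sq {ι : Type*} [Fintype ι] (v : ι → ℝ) :
    ∑ i, v i ^ 2 = ‖WithLp.toLp 2 v‖ ^ 2 := by
  simp [EuclideanSpace.real_norm_sq_eq]

lemma matOpNorm_eq_l2_opNorm {m : ℕ} (A : Matrix (Fin m) (Fin m) ℝ) : matOpNorm A = ‖A‖ := by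
  rw [← Matrix.l2_opNorm_toEuclideanCLM, ← ContinuousLinearMap.sSup_sphere_eq_norm, matOpNorm]
  congr 1
  ext r
  simp only [Set.mem_ofPred_eq, Set.mem_image, mem_sphere_zero_iff_norm]
  constructor
  · rintro ⟨v, hv, rfl⟩
    refine ⟨WithLp.toLp 2 v, ?_, ?_⟩
    · rw [← pow_eq_one_iff_of_nonneg (norm_nonneg _) two_ne_zero, ← sum_sq_eq_norm_toLp_sq, hv]
    · rw [← Real.sqrt_sq (norm_nonneg _), ← sum_sq_eq_norm_toLp_sq]
      rfl
  · rintro ⟨x, hx, rfl⟩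
    refine ⟨x.ofLp, ?_, ?_⟩
    · simpa [hx] using sum_sq_eq_norm_toLp_sq x.ofLp
    · rw [← Real.sqrt_sq (norm_nonneg _), ← sum_sq_eq_norm_toLp_sq]
      rfl

lemma exists_smul_eq_of_norm_le_mul {E : Type*} [NormedAddCommGroup E] [NormedSpace ℝ E]
    {c r : ℝ} {w : E} (hc : 0 ≤ c) (hr : 0 ≤ r) (h : ‖w‖ ≤ c * r) :
    ∃ y : E, c • y = w ∧ ‖y‖ ≤ r := by
  rcases hc.eq_or_lt with rfl | hc
  · exact ⟨0, by simpa [eq_comm] using h, by simpa using hr⟩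
  · refine ⟨c⁻¹ • w, smul_inv_smul₀ hc.ne' w, ?_⟩
    rw [norm_smul, Real.norm_of_nonneg (inv_nonneg.2 hc.le), inv_mul_le_iff₀ hc]
    linarith

section Integral

variable {α : Type*} [MeasurableSpace α] {μ : Measure α}

lemma integral_mul_le_sqrt_mul_sqrt {f g : α → ℝ} (hf₀ : 0 ≤ᵐ[μ] f) (hg₀ : 0 ≤ᵐ[μ] g)
    (hf : MemLp f 2 μ) (hg : MemLp g 2 μ) :
    ∫ a, f a * g a ∂μ ≤ √(∫ a, f a ^ 2 ∂μ) * √(∫ a, g a ^ 2 ∂μ) := by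
  simpa [Real.sqrt_eq_rpow] using integral_mul_le_Lp_mul_Lq_of_nonneg
    Real.HolderConjugate.two_two hf₀ hg₀ (by simpa using hf) (by simpa using hg)

lemma norm_integral_mulVec_le {ι κ : Type*} [Fintype ι] [Fintype κ] [DecidableEq κ]
    {A : α → Matrix ι κ ℝ} {u : α → κ → ℝ}
    (hA : AEStronglyMeasurable A μ) (hA₂ : Integrable (fun a => ‖A a‖ ^ 2) μ)
    (hu : AEStronglyMeasurable u μ) (hu₂ : Integrable (fun a => ∑ i, u a i ^ 2) μ) :
    ‖WithLp.toLp 2 (∫ a, A a *ᵥ u a ∂μ)‖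
      ≤ √(∫ a, ‖A a‖ ^ 2 ∂μ) * √(∫ a, ∑ i, u a i ^ 2 ∂μ) := by
  set U : α → EuclideanSpace ℝ κ := fun a => WithLp.toLp 2 (u a)
  have hU : AEStronglyMeasurable U μ :=
    (EuclideanSpace.equiv κ ℝ).symm.continuous.comp_aestronglyMeasurable hu
  have hU₂ : (fun a => ∑ i, u a i ^ 2) = fun a => ‖U a‖ ^ 2 :=
    funext fun a => sum_sq_eq_norm_toLp_sq (u a)
  have hAL2 : MemLp (fun a => ‖A a‖) 2 μ := (memLp_two_iff_integrable_sq hA.norm).2 hA₂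
  have hUL2 : MemLp (fun a => ‖U a‖) 2 μ :=
    (memLp_two_iff_integrable_sq hU.norm).2 (hU₂ ▸ hu₂)
  rw [hU₂]
  calc ‖WithLp.toLp 2 (∫ a, A a *ᵥ u a ∂μ)‖
      = ‖∫ a, WithLp.toLp 2 (A a *ᵥ u a) ∂μ‖ := by
        congr 1; exact ((EuclideanSpace.equiv ι ℝ).symm.integral_comp_comm _).symm
    _ ≤ ∫ a, ‖A a‖ * ‖U a‖ ∂μ :=
        norm_integral_le_of_norm_le (hAL2.integrable_mul hUL2)
          (.of_forall fun a => (A a).l2_opNorm_mulVec (U a))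
    _ ≤ √(∫ a, ‖A a‖ ^ 2 ∂μ) * √(∫ a, ‖U a‖ ^ 2 ∂μ) :=
        integral_mul_le_sqrt_mul_sqrt (.of_forall fun _ => norm_nonneg _)
          (.of_forall fun _ => norm_nonneg _) hAL2 hUL2

end Integral

lemma exists_PsiM_eq_PhiM {T : ℝ} (hT : 0 ≤ T) {d m : ℕ} {b : ℝ → (Fin d → ℝ) → Fin m → ℝ}
    {σ : ℝ → (Fin d → ℝ) → Matrix (Fin m) (Fin m) ℝ} {C Cbar : Matrix (Fin m) (Fin m) ℝ}
    {hat : (ℝ → Fin m → ℝ) → ℝ → Fin d → ℝ} {l' f f' : ℝ → Fin m → ℝ}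
    (hσf : ContinuousOn (fun s => σ s (hat f s)) (Set.Icc 0 T))
    (hl' : IntervalIntegrable l' volume 0 T)
    (hl'₂ : IntervalIntegrable (fun s => ∑ i, l' s i ^ 2) volume 0 T) :
    ∃ y : Fin m → ℝ, PsiM T d m b σ C Cbar hat y f f' = PhiM d m b σ C Cbar hat l' f f' T ∧
      ∑ i, y i ^ 2 ≤ ∫ s in (0:ℝ)..T, ∑ i, l' s i ^ 2 := by
  set A : ℝ → Matrix (Fin m) (Fin m) ℝ := fun s => σ s (hat f s) * Cbar
  have hA : ContinuousOn A (Set.Icc 0 T) := hσf.mul continuousOn_const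
  have hA₂ : IntegrableOn (fun s => ‖A s‖ ^ 2) (Set.Ioc 0 T) :=
    ((continuous_norm.comp_continuousOn hA).pow 2).integrableOn_Icc.mono_set
      Set.Ioc_subset_Icc_self
  have hbound := norm_integral_mulVec_le
    ((hA.mono Set.Ioc_subset_Icc_self).aestronglyMeasurable measurableSet_Ioc) hA₂
    hl'.1.aestronglyMeasurable hl'₂.1
  obtain ⟨y, hy, hyL⟩ :=
    exists_smul_eq_of_norm_le_mul (Real.sqrt_nonneg _) (Real.sqrt_nonneg _) hbound
  refine ⟨y.ofLp, ?_, ?_⟩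
  · have hw : √(∫ s in Set.Ioc 0 T, ‖σ s (hat f s) * Cbar‖ ^ 2) • y.ofLp
        = ∫ s in Set.Ioc 0 T, (σ s (hat f s) * Cbar) *ᵥ l' s :=
      congrArg WithLp.ofLp hy
    simp only [PsiM, PhiM, matOpNorm_eq_l2_opNorm, intervalIntegral.integral_of_le hT, hw]
    exact add_right_comm _ _ _
  · rw [sum_sq_eq_norm_toLp_sq, WithLp.toLp_ofLp, intervalIntegral.integral_of_le hT]
    calc ‖y‖ ^ 2 ≤ (√(∫ s in Set.Ioc 0 T, ∑ i, l' s i ^ 2)) ^ 2 := by gcongr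
      _ = _ := Real.sq_sqrt (integral_nonneg fun s => Finset.sum_nonneg fun i _ => sq_nonneg _)

theorem rate_function_le_multidim_general (T : ℝ) (hT : 0 < T) (d m : ℕ)
    (b : ℝ → (Fin d → ℝ) → Fin m → ℝ)
    (σ : ℝ → (Fin d → ℝ) → Matrix (Fin m) (Fin m) ℝ)
    (hσ : ContinuousOn (fun p : ℝ × (Fin d → ℝ) => σ p.1 p.2)
      (Set.Icc (0:ℝ) T ×ˢ Set.univ))
    (C Cbar : Matrix (Fin m) (Fin m) ℝ)
    (hat : (ℝ → Fin m → ℝ) → ℝ → Fin d → ℝ)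
    (hhat : ∀ f : ℝ → Fin m → ℝ, ContinuousOn (hat f) (Set.Icc (0:ℝ) T))
    (x : Fin m → ℝ) :
    sInf {v : ℝ≥0∞ | ∃ y : Fin m → ℝ, ∃ f f' : ℝ → Fin m → ℝ, IsCMv T m f f' ∧
        PsiM T d m b σ C Cbar hat y f f' = x ∧
        v = ENNReal.ofReal ((1 / 2) *
          ((∑ i, (y i) ^ 2) + ∫ t in (0:ℝ)..T, ∑ i, (f' t i) ^ 2))}
      ≤ sInf {v : ℝ≥0∞ | ∃ g g' : ℝ → Fin m → ℝ, IsCMv T m g g' ∧ g T = x ∧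
        v = QTM T d m b σ C Cbar hat g} := by
  refine le_sInf ?_
  rintro _ ⟨g, g', -, hgT, rfl⟩
  refine le_sInf ?_
  rintro _ ⟨l, l', f, f', hl, hf, hPhi, rfl⟩
  have hσf : ContinuousOn (fun s => σ s (hat f s)) (Set.Icc 0 T) :=
    hσ.comp (continuousOn_id.prodMk (hhat f)) fun s hs => ⟨hs, trivial⟩
  obtain ⟨y, hPsi, hy⟩ := exists_PsiM_eq_PhiM (b := b) (C := C) hT.le hσf hl.2.2.1 hl.2.2.2
  refine sInf_le_of_le ⟨y, f, f', hf, hPsi.trans ((hPhi T ⟨hT.le, le_rfl⟩).trans hgT), rfl⟩ ?_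
  gcongr

/-- for `m > 1`, `Ĩ_T(x) ≤ Î_T(x)` for every `x ∈ ℝᵐ`, where
`Î_T(x) = inf { Q̃_T(g) : g ∈ (H₀¹)ᵐ, g(T) = x }` and
`Ĩ_T(x) = (1/2) inf { ‖y‖² + ∫₀ᵀ ‖f'‖² : y ∈ ℝᵐ, f ∈ (H₀¹)ᵐ, Ψ(y,f) = x }`. -/
theorem rate_function_le_multidim (T : ℝ) (hT : 0 < T) (d m : ℕ) (hm : 1 < m)
    (b : ℝ → (Fin d → ℝ) → Fin m → ℝ)
    (σ : ℝ → (Fin d → ℝ) → Matrix (Fin m) (Fin m) ℝ)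
    (hb : ContinuousOn (fun p : ℝ × (Fin d → ℝ) => b p.1 p.2)
      (Set.Icc (0:ℝ) T ×ˢ Set.univ))
    (hσ : ContinuousOn (fun p : ℝ × (Fin d → ℝ) => σ p.1 p.2)
      (Set.Icc (0:ℝ) T ×ˢ Set.univ))
    (C Cbar : Matrix (Fin m) (Fin m) ℝ)
    (hCbarSymm : Cbar.IsSymm) (hCbarPos : Cbar.PosDef)
    (hat : (ℝ → Fin m → ℝ) → ℝ → Fin d → ℝ)
    (hhat : ∀ f : ℝ → Fin m → ℝ, ContinuousOn (hat f) (Set.Icc (0:ℝ) T))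
    (x : Fin m → ℝ) :
    sInf {v : ℝ≥0∞ | ∃ y : Fin m → ℝ, ∃ f f' : ℝ → Fin m → ℝ, IsCMv T m f f' ∧
        PsiM T d m b σ C Cbar hat y f f' = x ∧
        v = ENNReal.ofReal ((1 / 2) *
          ((∑ i, (y i) ^ 2) + ∫ t in (0:ℝ)..T, ∑ i, (f' t i) ^ 2))}
      ≤ sInf {v : ℝ≥0∞ | ∃ g g' : ℝ → Fin m → ℝ, IsCMv T m g g' ∧ g T = x ∧
        v = QTM T d m b σ C Cbar hat g} :=
  rate_function_le_multidim_general T hT d m b σ hσ C Cbar hat hhat x
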